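/- arXiv:1801.05558 — 3 statements merged into one kernel-verified Lean document; each statement's English description precedes it below -/
import Mathlib

section
/- (Proposition 1) Let A ∈ ℝ^{m×n}, x ∈ ℝ^n, and let U be a d-dimensional subspace of ℝ^m with d ≤ m. Then there exist an invertible T ∈ ℝ^{m×m}, a matrix W ∈ ℝ^{m×n} with A = T W, and a binary vector m ∈ {0,1}^m such that the set {−α T diag(m) Tᵀ G x : G ∈ ℝ^{m×n}, α ∈ ℝ} spans exactly U, provided x ≠ 0. -/
/-!
Because `x ≠ 0`, the vectors `G x` exhaust `ℝ^m`, and `Tᵀ` is invertible, so the update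
directions fill exactly the column space of `T diag(m)`, which is spanned by the columns `T_j`
with `m_j = 1`. It therefore suffices to take for the columns of `T` a basis of `ℝ^m` part of
which spans `U`, for `m` the indicator of that part, and `W = T⁻¹ A`.
-/

open Matrix Set Submodule

theorem Module.Basis.exists_span_image_eq {K V ι : Type*} [DivisionRing K] [AddCommGroup V]
    [Module K V] (b₀ : Basis ι K V) (U : Submodule K V) :
    ∃ (b : Basis ι K V) (s : Set ι), span K (b '' s) = U := by
  obtain ⟨t, -, htU, ht⟩ :
      ∃ t ⊆ (U : Set V), span K t = span K U ∧ LinearIndepOn K id t :=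
    exists_linearIndependent K _
  let B := Basis.extend ht
  let e := B.indexEquiv b₀
  refine ⟨B.reindex e, e '' (Subtype.val ⁻¹' t), ?_⟩
  have hBt : B '' (Subtype.val ⁻¹' t) = t := by
    rw [Basis.coe_extend ht, Subtype.image_preimage_coe,
      inter_eq_right.2 (Basis.subset_extend _)]
  calc span K (B.reindex e '' (e '' (Subtype.val ⁻¹' t)))
      = span K (B '' (Subtype.val ⁻¹' t)) := by
        simp only [image_image, Basis.reindex_apply, Equiv.symm_apply_apply]
    _ = U := by rw [hBt, htU, span_eq]

namespace Matrix

variable {ι κ ν R K : Type*}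

theorem col_mul_diagonal [Fintype κ] [DecidableEq κ] [CommSemiring R] (M : Matrix ι κ R)
    (d : κ → R) (j : κ) : (M * diagonal d).col j = d j • M.col j := by
  ext i; simp [mul_comm]

-- Without the ascription on `1`, `*` elaborates through the `CStarMatrix` instance.
theorem range_mulVecLin_mul_diagonal_indicator [Fintype κ] [DecidableEq κ] [CommSemiring R]
    (M : Matrix ι κ R) (s : Set κ) :
    LinearMap.range (M * diagonal (s.indicator (1 : κ → R))).mulVecLin =
      span R (M.col '' s) := by
  rw [range_mulVecLin]
  apply le_antisymm <;> rw [span_le]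
  · rintro _ ⟨j, rfl⟩
    rw [col_mul_diagonal]
    by_cases hj : j ∈ s
    · simpa [hj] using subset_span (mem_image_of_mem _ hj)
    · simp [hj]
  · rintro _ ⟨j, hj, rfl⟩
    exact subset_span ⟨j, by simp [col_mul_diagonal, hj]⟩

theorem range_mulVecLin_mul_of_isUnit [Fintype κ] [DecidableEq κ] [CommRing R]
    (M : Matrix ι κ R) {N : Matrix κ κ R} (hN : IsUnit N) :
    LinearMap.range (M * N).mulVecLin = LinearMap.range M.mulVecLin := by
  rw [mulVecLin_mul, LinearMap.range_comp_of_range_eq_top]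
  exact LinearMap.range_eq_top.2 (mulVec_surjective_iff_isUnit.2 hN)

theorem exists_mulVec_eq [Fintype κ] [DecidableEq κ] [Field K] {x : κ → K} (hx : x ≠ 0)
    (w : ι → K) : ∃ G : Matrix ι κ K, G *ᵥ x = w := by
  obtain ⟨j, hj⟩ : ∃ j, x j ≠ 0 := Function.ne_iff.1 hx
  exact ⟨vecMulVec w (Pi.single j (x j)⁻¹), by
    rw [vecMulVec_mulVec, single_dotProduct, inv_mul_cancel₀ hj, MulOpposite.op_one, one_smul]⟩

theorem span_neg_smul_mul_mulVec_eq_range [Fintype κ] [Fintype ν] [DecidableEq ν] [Field K]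
    (M : Matrix ι κ K) {x : ν → K} (hx : x ≠ 0) :
    span K {v | ∃ (G : Matrix κ ν K) (α : K), v = -α • ((M * G) *ᵥ x)} =
      LinearMap.range M.mulVecLin := by
  suffices {v | ∃ (G : Matrix κ ν K) (α : K), v = -α • ((M * G) *ᵥ x)} =
      LinearMap.range M.mulVecLin by rw [this, span_eq]
  ext v
  constructor
  · rintro ⟨G, α, rfl⟩
    exact ⟨-α • (G *ᵥ x), by simp [mulVec_smul, mulVec_neg, mulVec_mulVec]⟩
  · rintro ⟨w, rfl⟩
    obtain ⟨G, hG⟩ := exists_mulVec_eq hx w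
    exact ⟨G, -1, by simp [← mulVec_mulVec, hG]⟩

end Matrix

theorem stmt_5_general {m n : ℕ} (A : Matrix (Fin m) (Fin n) ℝ) (x : Fin n → ℝ) (hx : x ≠ 0)
    (U : Submodule ℝ (Fin m → ℝ)) :
    ∃ (T : Matrix (Fin m) (Fin m) ℝ) (W : Matrix (Fin m) (Fin n) ℝ) (mvec : Fin m → ℝ),
      IsUnit T.det ∧ A = T * W ∧ (∀ j, mvec j = 0 ∨ mvec j = 1) ∧
      Submodule.span ℝ
        {v : Fin m → ℝ | ∃ (G : Matrix (Fin m) (Fin n) ℝ) (α : ℝ),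
          v = -α • ((T * diagonal mvec * Tᵀ * G) *ᵥ x)} = U := by
  obtain ⟨b, s, hbU⟩ := (Pi.basisFun ℝ (Fin m)).exists_span_image_eq U
  let T : Matrix (Fin m) (Fin m) ℝ := (of b)ᵀ
  have hT : IsUnit T := linearIndependent_cols_iff_isUnit.1 b.linearIndependent
  have hTdet : IsUnit T.det := (isUnit_iff_isUnit_det T).1 hT
  refine ⟨T, T⁻¹ * A, s.indicator 1, hTdet, (mul_nonsing_inv_cancel_left _ A hTdet).symm,
    fun j => ?_, ?_⟩
  · by_cases hj : j ∈ s <;> simp [hj]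
  · rw [span_neg_smul_mul_mulVec_eq_range _ hx,
      range_mulVecLin_mul_of_isUnit _ ((isUnit_transpose T).2 hT),
      range_mulVecLin_mul_diagonal_indicator]
    exact hbU

/-- Proposition 1: for `A ∈ ℝ^{m×n}`, nonzero `x ∈ ℝ^n` and a `d`-dimensional subspace
`U ⊆ ℝ^m` (`d ≤ m`), there exist an invertible `T`, a matrix `W` with `A = T W`, and a
binary vector `mvec ∈ {0,1}^m` such that the set of attainable MT-net update directions
`{−α T diag(m) Tᵀ G x : G ∈ ℝ^{m×n}, α ∈ ℝ}` spans exactly `U`. -/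
theorem stmt_5 {m n d : ℕ} (A : Matrix (Fin m) (Fin n) ℝ) (x : Fin n → ℝ) (hx : x ≠ 0)
    (U : Submodule ℝ (Fin m → ℝ)) (hU : Module.finrank ℝ U = d) (hd : d ≤ m) :
    ∃ (T : Matrix (Fin m) (Fin m) ℝ) (W : Matrix (Fin m) (Fin n) ℝ) (mvec : Fin m → ℝ),
      IsUnit T.det ∧ A = T * W ∧ (∀ j, mvec j = 0 ∨ mvec j = 1) ∧
      Submodule.span ℝ
        {v : Fin m → ℝ | ∃ (G : Matrix (Fin m) (Fin n) ℝ) (α : ℝ),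
          v = -α • ((T * diagonal mvec * Tᵀ * G) *ᵥ x)} = U :=
  stmt_5_general A x hx U
end

section
/- (Proposition 2, core linear algebra) Let U be a d-dimensional subspace of ℝ^m and g a positive definite symmetric bilinear form (metric) on U. Then there exists an invertible T ∈ ℝ^{m×m} and a binary vector m with d ones such that for every v ∈ ℝ^m, the vector −T diag(m) Tᵀ v lies in U and is the direction of steepest descent of the linear functional w ↦ ⟨v, w⟩ restricted to U with respect to g; equivalently, T diag(m) Tᵀ restricted to U acts as the inverse of the Gram matrix of g in a suitable basis. -/
/-!
Choose a basis `b₁, …, b_d` of `U` that is orthonormal for `g` (diagonalize the symmetric form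
and rescale, using positivity), extend it to a basis of `ℝ^m`, let `T` have these vectors as
columns and let `m` select the `bᵢ`. Then `T diag(m) Tᵀ v = ∑ ⟨v, bᵢ⟩ bᵢ ∈ U`, and for `w ∈ U`,
`g (∑ ⟨v, bᵢ⟩ bᵢ) w = ⟨v, ∑ g bᵢ w • bᵢ⟩ = ⟨v, w⟩` because the coefficients of `w` in an
orthonormal basis are the `g bᵢ w`.
-/

open Matrix Module

theorem Module.Basis.sumExtend_apply_inl {K V ι : Type*} [DivisionRing K] [AddCommGroup V]
    [Module K V] {v : ι → V} (hs : LinearIndependent K v) (i : ι) :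
    Basis.sumExtend hs (Sum.inl i) = v i := by
  simp only [Basis.sumExtend, Basis.reindex_apply, Basis.coe_extend]
  rfl

theorem LinearMap.BilinForm.exists_basis_orthonormal {V : Type*} [AddCommGroup V] [Module ℝ V]
    [FiniteDimensional ℝ V] {G : LinearMap.BilinForm ℝ V} (hG : G.IsSymm)
    (hpos : ∀ x, x ≠ 0 → 0 < G x x) :
    ∃ b : Basis (Fin (finrank ℝ V)) ℝ V, ∀ i j, G (b i) (b j) = if i = j then 1 else 0 := by
  obtain ⟨w, hw⟩ := LinearMap.BilinForm.exists_orthogonal_basis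
    (LinearMap.BilinForm.isSymm_iff.mp hG)
  have hw_pos : ∀ i, 0 < G (w i) (w i) := fun i => hpos _ (w.ne_zero i)
  let c : Fin (finrank ℝ V) → ℝˣ := fun i => .mk0 (√(G (w i) (w i)))⁻¹
    (inv_ne_zero (Real.sqrt_pos.2 (hw_pos i)).ne')
  refine ⟨w.unitsSMul c, fun i j => ?_⟩
  simp only [Basis.unitsSMul_apply, Units.smul_def, Units.val_mk0, c, map_smul,
    LinearMap.smul_apply, smul_eq_mul]
  split_ifs with hij
  · subst hij
    rw [← mul_assoc, ← mul_inv, Real.mul_self_sqrt (hw_pos i).le, inv_mul_cancel₀ (hw_pos i).ne']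
  · rw [hw hij, mul_zero, mul_zero]

theorem LinearMap.BilinForm.sum_apply_smul_of_orthonormal {R M ι : Type*} [CommSemiring R]
    [AddCommMonoid M] [Module R M] [Fintype ι] [DecidableEq ι] {G : LinearMap.BilinForm R M}
    {b : Basis ι R M} (hb : ∀ i j, G (b i) (b j) = if i = j then 1 else 0) (x : M) :
    ∑ i, G (b i) x • b i = x := by
  have hrepr : ∀ i, G (b i) x = b.repr x i := fun i => by
    conv_lhs => rw [← b.sum_repr x]
    simp only [map_sum, map_smul, hb, smul_eq_mul, mul_ite, mul_one, mul_zero,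
      Finset.sum_ite_eq, Finset.mem_univ, if_true]
  simp only [hrepr, b.sum_repr]

theorem LinearMap.apply_sum_smul_of_orthonormal {R M ι : Type*} [CommSemiring R]
    [AddCommMonoid M] [Module R M] [Fintype ι] [DecidableEq ι] {U : Submodule R M}
    {g : M →ₗ[R] M →ₗ[R] R} {b : Basis ι R U}
    (hb : ∀ i j, g (b i) (b j) = if i = j then 1 else 0) (ℓ : M →ₗ[R] R) {w : M} (hw : w ∈ U) :
    g (∑ i, ℓ (b i) • (b i : M)) w = ℓ w := by
  have hw_exp : ∑ i, g (b i) w • (b i : M) = w := by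
    simpa [LinearMap.domRestrict₁₂_apply] using congrArg Subtype.val
      (LinearMap.BilinForm.sum_apply_smul_of_orthonormal (G := g.domRestrict₁₂ U U) hb ⟨w, hw⟩)
  conv_rhs => rw [← hw_exp]
  simp only [map_sum, map_smul, LinearMap.sum_apply, LinearMap.smul_apply, smul_eq_mul, mul_comm]

theorem Matrix.mul_diagonal_mul_transpose_mulVec {R n κ : Type*} [CommSemiring R] [Fintype n]
    [Fintype κ] [DecidableEq κ] (T : Matrix n κ R) (μ : κ → R) (v : n → R) :
    (T * diagonal μ * Tᵀ) *ᵥ v = ∑ j, (μ j * (v ⬝ᵥ Tᵀ j)) • Tᵀ j := by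
  rw [← mulVec_mulVec, ← mulVec_mulVec, mulVec_eq_sum]
  simp only [mulVec_diagonal, mulVec_transpose, op_smul_eq_smul]
  rfl

theorem Matrix.mul_indicator_mul_transpose_mulVec {R n ι σ : Type*} [CommSemiring R] [Fintype n]
    [Fintype ι] [Fintype σ] [DecidableEq n] (e : ι ⊕ σ ≃ n) {T : Matrix n n R}
    {B : ι ⊕ σ → n → R} (hT : ∀ k, Tᵀ (e k) = B k) (v : n → R) :
    (T * diagonal ((Set.range (e ∘ Sum.inl)).indicator 1) * Tᵀ) *ᵥ v =
      ∑ i, (v ⬝ᵥ B (.inl i)) • B (.inl i) := by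
  rw [mul_diagonal_mul_transpose_mulVec, ← e.sum_comp, Fintype.sum_sum_type]
  simp [hT]

/-- Proposition 2 (core linear algebra): let `U ⊆ ℝ^m` be a `d`-dimensional subspace and
`g` a metric on `U` (a bilinear form, symmetric and positive definite on `U`). Then there
exist an invertible `T` and a binary vector `mvec` with exactly `d` ones such that for
every `v ∈ ℝ^m`, the vector `u = −T diag(m) Tᵀ v` lies in `U` and is the steepest descent
direction of `w ↦ ⟨v, w⟩` on `U` with respect to `g`, characterized by the Riesz-type
identity `g(u, w) = −⟨v, w⟩` for all `w ∈ U` (i.e. `T diag(m) Tᵀ` acts on `U` as the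
inverse of the Gram matrix of `g`). -/
theorem stmt_7 {m d : ℕ} (U : Submodule ℝ (Fin m → ℝ)) (hU : Module.finrank ℝ U = d)
    (g : (Fin m → ℝ) →ₗ[ℝ] (Fin m → ℝ) →ₗ[ℝ] ℝ)
    (hsymm : ∀ u ∈ U, ∀ w ∈ U, g u w = g w u)
    (hpos : ∀ u ∈ U, u ≠ 0 → 0 < g u u) :
    ∃ (T : Matrix (Fin m) (Fin m) ℝ) (mvec : Fin m → ℝ),
      IsUnit T.det ∧ (∀ j, mvec j = 0 ∨ mvec j = 1) ∧ Set.ncard {j | mvec j = 1} = d ∧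
      ∀ v : Fin m → ℝ,
        (-((T * diagonal mvec * Tᵀ) *ᵥ v)) ∈ U ∧
        ∀ w ∈ U, g (-((T * diagonal mvec * Tᵀ) *ᵥ v)) w = -(v ⬝ᵥ w) := by
  obtain ⟨b, hb⟩ := LinearMap.BilinForm.exists_basis_orthonormal (G := g.domRestrict₁₂ U U)
    ⟨fun x y => hsymm x x.2 y y.2⟩ (fun x hx => hpos x x.2 (by simpa using hx))
  let hli := b.linearIndependent.map' U.subtype U.ker_subtype
  let B := Basis.sumExtend hli
  let e := B.indexEquiv (Pi.basisFun ℝ (Fin m))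
  let _ := Fintype.ofInjective (e ∘ Sum.inr) (e.injective.comp Sum.inr_injective)
  let T : Matrix (Fin m) (Fin m) ℝ := (of (B.reindex e))ᵀ
  let S := Set.range (e ∘ Sum.inl)
  have hT : ∀ k, Tᵀ (e k) = B k := fun k => by
    rw [show Tᵀ (e k) = B.reindex e (e k) from rfl, Basis.reindex_apply, e.symm_apply_apply]
  have hTv : ∀ v, (T * diagonal (S.indicator 1) * Tᵀ) *ᵥ v =
      ∑ i, (v ⬝ᵥ b i) • (b i : Fin m → ℝ) := fun v => by
    rw [mul_indicator_mul_transpose_mulVec e hT]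
    simp only [B, Basis.sumExtend_apply_inl, Function.comp_apply, Submodule.subtype_apply]
  refine ⟨T, S.indicator 1, ?_, fun j => ?_, ?_, fun v => ⟨?_, fun w hw => ?_⟩⟩
  · have := (Pi.basisFun ℝ (Fin m)).isUnit_det (B.reindex e)
    rwa [Basis.det_apply, Basis.coePiBasisFun.toMatrix_eq_transpose] at this
  · exact (em (j ∈ S)).symm.imp (Set.indicator_eq_zero_iff_notMem ℝ).2
      (Set.indicator_eq_one_iff_mem ℝ).2
  · simp_rw [Set.indicator_eq_one_iff_mem ℝ, Set.ofPred_mem_eq, S,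
      Set.ncard_range_of_injective (e.injective.comp Sum.inl_injective), Nat.card_fin, hU]
  · rw [hTv]
    exact neg_mem (sum_mem fun i _ => U.smul_mem _ (b i).2)
  · rw [hTv, map_neg, LinearMap.neg_apply, neg_inj]
    exact LinearMap.apply_sum_smul_of_orthonormal hb (dotProductBilin ℝ ℝ v) hw
end

section
/- The Gumbel-Softmax limit: for fixed logit ζ ∈ ℝ and independent standard Gumbel variables g₁, g₂, the random variable σ_c = exp((ζ+g₁)/c) / (exp((ζ+g₁)/c) + exp(g₂/c)) converges in distribution as c → 0⁺ to a Bernoulli random variable with success probability e^ζ/(e^ζ+1). -/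
/-! The map `F x = exp (-exp (-x))` pushes the standard Gumbel law forward to the uniform law
on `(0, 1]`, and `F (ζ + x) = F x ^ exp (-ζ)`. Hence, by independence,
`P(g₂ < ζ + g₁) = E[F (ζ + g₁)] = ∫₀¹ u ^ exp (-ζ) du = e^ζ / (e^ζ + 1)`, and ties
`g₂ = ζ + g₁` have probability zero since the Gumbel law has no atoms. Off the ties, `σ_c`
tends to `1` or `0` according as `g₂ < ζ + g₁` or not, and dominated convergence gives the
limit of `E[f(σ_c)]`. -/

open MeasureTheory ProbabilityTheory Real Filter Topology Set

noncomputable def gumbelCDF (x : ℝ) : ℝ := exp (-exp (-x))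

lemma continuous_gumbelCDF : Continuous gumbelCDF := by
  unfold gumbelCDF; fun_prop

lemma measurable_gumbelCDF : Measurable gumbelCDF := continuous_gumbelCDF.measurable

lemma gumbelCDF_pos (x : ℝ) : 0 < gumbelCDF x := exp_pos _

lemma gumbelCDF_le_one (x : ℝ) : gumbelCDF x ≤ 1 :=
  exp_le_one_iff.2 (neg_nonpos.2 (exp_pos _).le)

lemma strictMono_gumbelCDF : StrictMono gumbelCDF := fun _ _ h =>
  exp_lt_exp.2 (neg_lt_neg (exp_lt_exp.2 (neg_lt_neg h)))

lemma gumbelCDF_neg_log_neg_log {u : ℝ} (h0 : 0 < u) (h1 : u < 1) :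
    gumbelCDF (-log (-log u)) = u := by
  rw [gumbelCDF, neg_neg, exp_log (neg_pos.2 (log_neg h0 h1)), neg_neg, exp_log h0]

lemma gumbelCDF_add (ζ x : ℝ) : gumbelCDF (ζ + x) = gumbelCDF x ^ exp (-ζ) := by
  rw [gumbelCDF, gumbelCDF, rpow_def_of_pos (exp_pos _), log_exp, neg_add, exp_add]
  ring_nf

def IsStdGumbel (μ : Measure ℝ) : Prop :=
  ∀ x, μ (Iic x) = ENNReal.ofReal (gumbelCDF x)

namespace IsStdGumbel

variable {μ : Measure ℝ} [IsProbabilityMeasure μ]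

theorem map_gumbelCDF (hμ : IsStdGumbel μ) :
    μ.map gumbelCDF = volume.restrict (Ioc 0 1) := by
  refine Measure.ext_of_Iic _ _ fun u => ?_
  rw [Measure.map_apply measurable_gumbelCDF measurableSet_Iic,
    Measure.restrict_apply measurableSet_Iic, inter_comm, Ioc_inter_Iic, volume_Ioc, sub_zero]
  rcases le_or_gt u 0 with hu0 | hu0
  · have hempty : gumbelCDF ⁻¹' Iic u = ∅ :=
      eq_empty_of_forall_notMem fun x hx => (gumbelCDF_pos x).not_ge (le_trans hx hu0)
    rw [hempty, measure_empty, ENNReal.ofReal_of_nonpos (min_le_of_right_le hu0)]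
  rcases lt_or_ge u 1 with hu1 | hu1
  · have hIic : gumbelCDF ⁻¹' Iic u = Iic (-log (-log u)) := by
      ext x
      conv_lhs => rw [← gumbelCDF_neg_log_neg_log hu0 hu1]
      exact strictMono_gumbelCDF.le_iff_le
    rw [hIic, hμ, gumbelCDF_neg_log_neg_log hu0 hu1, min_eq_right hu1.le]
  · have huniv : gumbelCDF ⁻¹' Iic u = univ :=
      eq_univ_of_forall fun x => (gumbelCDF_le_one x).trans hu1
    rw [huniv, measure_univ, min_eq_left hu1, ENNReal.ofReal_one]

theorem nullSingletonClass (hμ : IsStdGumbel μ) : NullSingletonClass μ where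
  measure_singleton t := by
    refine measure_mono_null (t := gumbelCDF ⁻¹' {gumbelCDF t})
      (fun x hx => congrArg gumbelCDF (mem_singleton_iff.1 hx)) ?_
    rw [← Measure.map_apply measurable_gumbelCDF (measurableSet_singleton _), hμ.map_gumbelCDF]
    exact measure_singleton _

theorem integral_gumbelCDF_add (hμ : IsStdGumbel μ) (ζ : ℝ) :
    ∫ x, gumbelCDF (ζ + x) ∂μ = exp ζ / (exp ζ + 1) := by
  simp_rw [gumbelCDF_add]
  rw [← integral_map (f := fun u => u ^ exp (-ζ)) measurable_gumbelCDF.aemeasurable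
      (measurable_id.pow_const _).aestronglyMeasurable, hμ.map_gumbelCDF,
    ← intervalIntegral.integral_of_le zero_le_one,
    integral_rpow (Or.inl (by linarith [exp_pos (-ζ)])),
    one_rpow, zero_rpow (by positivity), exp_neg]
  field_simp
  ring

end IsStdGumbel

theorem ProbabilityTheory.IndepFun.measure_preimage_eq_lintegral {Ω β γ : Type*}
    [MeasurableSpace Ω] [MeasurableSpace β] [MeasurableSpace γ] {P : Measure Ω}
    [IsFiniteMeasure P] {X : Ω → β} {Y : Ω → γ} (hX : Measurable X) (hY : Measurable Y)
    (hXY : IndepFun X Y P) {S : Set (β × γ)} (hS : MeasurableSet S) :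
    P ((fun ω => (X ω, Y ω)) ⁻¹' S) =
      ∫⁻ x, P.map Y (Prod.mk x ⁻¹' S) ∂(P.map X) := by
  rw [← Measure.map_apply (hX.prodMk hY) hS,
    (indepFun_iff_map_prod_eq_prod_map_map hX.aemeasurable hY.aemeasurable).1 hXY,
    Measure.prod_apply hS]

theorem isStdGumbel_map {Ω : Type*} [MeasurableSpace Ω] {P : Measure Ω} {g : Ω → ℝ}
    (hg : Measurable g)
    (hcdf : ∀ x : ℝ, P {ω | g ω ≤ x} = ENNReal.ofReal (exp (-exp (-x)))) :
    IsStdGumbel (P.map g) := fun x => by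
  rw [Measure.map_apply hg measurableSet_Iic]
  exact hcdf x

section Gumbel

variable {Ω : Type*} [MeasurableSpace Ω] {P : Measure Ω} [IsProbabilityMeasure P]
  {g₁ g₂ : Ω → ℝ}

theorem ae_ne_add_of_isStdGumbel (hg₁ : Measurable g₁) (hg₂ : Measurable g₂)
    (hind : IndepFun g₁ g₂ P) (h₂ : IsStdGumbel (P.map g₂)) (ζ : ℝ) :
    ∀ᵐ ω ∂P, g₂ ω ≠ ζ + g₁ ω := by
  have := Measure.isProbabilityMeasure_map (μ := P) hg₂.aemeasurable
  have := h₂.nullSingletonClass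
  refine ae_iff.2 ?_
  simp only [ne_eq, not_not]
  change P ((fun ω => (g₁ ω, g₂ ω)) ⁻¹' {p | p.2 = ζ + p.1}) = 0
  rw [hind.measure_preimage_eq_lintegral hg₁ hg₂
    (measurableSet_eq_fun measurable_snd (by fun_prop))]
  exact (lintegral_congr fun x => measure_singleton (ζ + x)).trans lintegral_zero

theorem measure_lt_add_of_isStdGumbel (hg₁ : Measurable g₁) (hg₂ : Measurable g₂)
    (hind : IndepFun g₁ g₂ P) (h₁ : IsStdGumbel (P.map g₁))
    (h₂ : IsStdGumbel (P.map g₂)) (ζ : ℝ) :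
    P {ω | g₂ ω < ζ + g₁ ω} = ENNReal.ofReal (exp ζ / (exp ζ + 1)) := by
  have := Measure.isProbabilityMeasure_map (μ := P) hg₁.aemeasurable
  have := Measure.isProbabilityMeasure_map (μ := P) hg₂.aemeasurable
  have := h₂.nullSingletonClass
  change P ((fun ω => (g₁ ω, g₂ ω)) ⁻¹' {p | p.2 < ζ + p.1}) = _
  rw [hind.measure_preimage_eq_lintegral hg₁ hg₂
    (measurableSet_lt measurable_snd (by fun_prop))]
  have hsection (x : ℝ) :
      P.map g₂ (Prod.mk x ⁻¹' {p | p.2 < ζ + p.1}) = ENNReal.ofReal (gumbelCDF (ζ + x)) :=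
    (measure_congr (Iio_ae_eq_Iic (a := ζ + x))).trans (h₂ _)
  have hint : Integrable (fun x => gumbelCDF (ζ + x)) (P.map g₁) :=
    .of_bound (continuous_gumbelCDF.comp (continuous_const_add ζ)).aestronglyMeasurable 1
      (ae_of_all _ fun x => by
        rw [norm_of_nonneg (gumbelCDF_pos _).le]; exact gumbelCDF_le_one _)
  simp_rw [hsection, ← h₁.integral_gumbelCDF_add ζ]
  exact (ofReal_integral_eq_lintegral_ofReal hint
    (ae_of_all _ fun x => (gumbelCDF_pos _).le)).symm

end Gumbel

theorem tendsto_exp_div_exp_add_exp {a b : ℝ} (hab : a ≠ b) :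
    Tendsto (fun c => exp (a / c) / (exp (a / c) + exp (b / c))) (𝓝[>] 0)
      (𝓝 (if b < a then 1 else 0)) := by
  have hlogistic (c : ℝ) :
      exp (a / c) / (exp (a / c) + exp (b / c)) = (1 + exp ((b - a) / c))⁻¹ := by
    rw [sub_div, exp_sub]
    field_simp
  simp_rw [hlogistic, div_eq_mul_inv]
  rcases hab.lt_or_gt with hlt | hgt
  · rw [if_neg hlt.not_gt]
    have := tendsto_inv_nhdsGT_zero.const_mul_atTop (sub_pos.2 hlt)
    exact (tendsto_atTop_add_const_left _ 1 (tendsto_exp_atTop.comp this)).inv_tendsto_atTop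
  · rw [if_pos hgt]
    have := tendsto_inv_nhdsGT_zero.const_mul_atTop_of_neg (sub_neg.2 hgt)
    simpa using
      ((tendsto_const_nhds (x := (1 : ℝ))).add (tendsto_exp_atBot.comp this)).inv₀ (by norm_num)

theorem tendsto_integral_comp_of_ae_tendsto_indicator {ι Ω : Type*} [MeasurableSpace Ω]
    {P : Measure Ω} [IsProbabilityMeasure P] {l : Filter ι} [l.IsCountablyGenerated]
    {X : ι → Ω → ℝ} (hX : ∀ i, AEMeasurable (X i) P) {A : Set Ω} (hA : MeasurableSet A)
    (hlim : ∀ᵐ ω ∂P, Tendsto (fun i => X i ω) l (𝓝 (A.indicator 1 ω)))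
    (f : BoundedContinuousFunction ℝ ℝ) :
    Tendsto (fun i => ∫ ω, f (X i ω) ∂P) l
      (𝓝 (P.real A * f 1 + (1 - P.real A) * f 0)) := by
  have hf_indicator :
      (fun ω => f (A.indicator 1 ω)) = fun ω => A.indicator (fun _ => f 1 - f 0) ω + f 0 := by
    ext ω
    by_cases h : ω ∈ A <;> simp [h]
  have hlimit : ∫ ω, f (A.indicator 1 ω) ∂P = P.real A * f 1 + (1 - P.real A) * f 0 := by
    rw [hf_indicator, integral_add ((integrable_indicator_iff hA).2 integrableOn_const)
      (integrable_const _), integral_indicator_const _ hA, integral_const, probReal_univ]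
    simp only [smul_eq_mul]
    ring
  rw [← hlimit]
  exact tendsto_integral_filter_of_dominated_convergence (fun _ => ‖f‖)
    (.of_forall fun i => (f.continuous.measurable.comp_aemeasurable (hX i)).aestronglyMeasurable)
    (.of_forall fun _ => ae_of_all _ fun _ => f.norm_coe_le_norm _) (integrable_const _)
    (hlim.mono fun _ h => (f.continuous.tendsto _).comp h)

/-- Gumbel-Softmax limit: for a fixed logit `ζ` and independent standard Gumbel random
variables `g₁, g₂` (CDF `x ↦ exp(−e^{−x})`), the random variable
`σ_c = exp((ζ+g₁)/c) / (exp((ζ+g₁)/c) + exp(g₂/c))` converges in distribution as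
`c → 0⁺` to a Bernoulli random variable with success probability `e^ζ/(e^ζ+1)`:
for every bounded continuous test function `f`,
`E[f(σ_c)] → p f(1) + (1−p) f(0)` with `p = e^ζ/(e^ζ+1)`. -/
theorem stmt_15 {Ω : Type*} [MeasureSpace Ω] [IsProbabilityMeasure (ℙ : Measure Ω)]
    (g₁ g₂ : Ω → ℝ) (hg₁ : Measurable g₁) (hg₂ : Measurable g₂)
    (hindep : IndepFun g₁ g₂ ℙ)
    (hcdf₁ : ∀ x : ℝ, ℙ {ω | g₁ ω ≤ x} = ENNReal.ofReal (exp (-exp (-x))))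
    (hcdf₂ : ∀ x : ℝ, ℙ {ω | g₂ ω ≤ x} = ENNReal.ofReal (exp (-exp (-x))))
    (ζ : ℝ) (σ : ℝ → Ω → ℝ)
    (hσ : ∀ c ω, σ c ω =
      exp ((ζ + g₁ ω) / c) / (exp ((ζ + g₁ ω) / c) + exp (g₂ ω / c))) :
    ∀ f : BoundedContinuousFunction ℝ ℝ,
      Tendsto (fun c => ∫ ω, f (σ c ω) ∂ℙ) (𝓝[>] (0 : ℝ))
        (𝓝 ((exp ζ / (exp ζ + 1)) * f 1 + (1 - exp ζ / (exp ζ + 1)) * f 0)) := by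
  intro f
  have h₁ := isStdGumbel_map hg₁ hcdf₁
  have h₂ := isStdGumbel_map hg₂ hcdf₂
  have hwin : (ℙ : Measure Ω).real {ω | g₂ ω < ζ + g₁ ω} = exp ζ / (exp ζ + 1) := by
    rw [measureReal_def, measure_lt_add_of_isStdGumbel hg₁ hg₂ hindep h₁ h₂ ζ,
      ENNReal.toReal_ofReal (by positivity)]
  rw [← hwin]
  refine tendsto_integral_comp_of_ae_tendsto_indicator (fun c => ?_)
    (measurableSet_lt hg₂ (measurable_const.add hg₁)) ?_ f
  · rw [funext (hσ c)]
    fun_prop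
  · filter_upwards [ae_ne_add_of_isStdGumbel hg₁ hg₂ hindep h₂ ζ] with ω hω
    simp only [hσ, indicator_apply, mem_ofPred_eq, Pi.one_apply]
    exact tendsto_exp_div_exp_add_exp hω.symm
end
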